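/- Let f : ℝ → ℝ be continuous and non-negative with f(s) = c > 0 for s ≤ 0, and let Ψ be a non-negative integrable kernel supported in [θ,L] (0 < θ < L) with total mass 1. Define E(t) = c·∫_θ^L Ψ(τ)τ dτ + ∫_0^t ∫_θ^L (f(s) - f(s-τ))Ψ(τ) dτ ds. Then E(t) = ∫_θ^L Ψ(τ)(∫_{t-τ}^t f(s) ds) dτ ≥ 0 for all t ≥ 0. -/

import Mathlib

/-!
Shifting the delayed term gives `∫₀ᵗ (f s - f (s - τ)) ds = ∫_{t-τ}^t f - ∫_{-τ}^0 f`, and the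
constant history makes the last integral `c τ`. Integrating this against `Ψ` over `[θ, L]`, after
swapping the order of integration (Fubini on a compact rectangle: `f` is continuous and `Ψ`
integrable), turns `E(t)` into `∫_θ^L Ψ(τ) ∫_{t-τ}^t f`, which is non-negative since `f, Ψ ≥ 0`
and `τ ≥ θ > 0`.
-/

open MeasureTheory intervalIntegral

open Set

theorem intervalIntegral_intervalIntegral_swap_of_continuous_mul {g : ℝ → ℝ → ℝ} {Ψ : ℝ → ℝ}
    {a b θ L : ℝ} (hg : Continuous (Function.uncurry g)) (hΨ : IntervalIntegrable Ψ volume θ L) :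
    ∫ s in a..b, ∫ τ in θ..L, g s τ * Ψ τ = ∫ τ in θ..L, ∫ s in a..b, g s τ * Ψ τ := by
  have hΨ_snd : IntegrableOn (fun z : ℝ × ℝ => Ψ z.2) (uIoc a b ×ˢ uIoc θ L) := by
    rw [IntegrableOn, Measure.volume_eq_prod, ← Measure.prod_restrict]
    simpa only [one_mul] using
      (integrableOn_const (s := uIoc a b) (C := (1 : ℝ)) measure_Ioc_lt_top.ne).mul_prod hΨ.def'
  exact intervalIntegral_intervalIntegral_swap <|
    hΨ_snd.continuousOn_mul_of_subset hg.continuousOn (isCompact_uIcc.prod isCompact_uIcc)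
      (measurableSet_uIoc.prod measurableSet_uIoc) (prod_mono uIoc_subset_uIcc uIoc_subset_uIcc)

theorem integral_sub_comp_sub_right {f : ℝ → ℝ} (hf : Continuous f) (a b τ : ℝ) :
    ∫ s in a..b, (f s - f (s - τ)) = (∫ s in (b - τ)..b, f s) - ∫ s in (a - τ)..a, f s := by
  have hfI : ∀ a b, IntervalIntegrable f volume a b := hf.intervalIntegrable
  have hshift : IntervalIntegrable (fun s => f (s - τ)) volume a b :=
    (hf.comp (continuous_sub_right τ)).intervalIntegrable a b
  rw [integral_sub (hfI a b) hshift,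
    intervalIntegral.integral_comp_sub_right,
    integral_interval_sub_interval_comm' (hfI _ _) (hfI _ _) (hfI _ _)]

theorem continuous_integral_sub_left {f : ℝ → ℝ} (hf : Continuous f) (t : ℝ) :
    Continuous fun τ => ∫ s in (t - τ)..t, f s := by
  have h : (fun τ => ∫ s in (t - τ)..t, f s) = fun τ => -∫ s in t..(t - τ), f s :=
    funext fun τ => integral_symm _ _
  rw [h]
  exact ((continuous_primitive hf.intervalIntegrable t).comp (continuous_sub_left t)).neg

theorem integral_sub_comp_sub_right_of_constant_history {f : ℝ → ℝ} {c τ : ℝ} (hf : Continuous f)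
    (hhist : ∀ s ≤ 0, f s = c) (hτ : 0 ≤ τ) (t : ℝ) :
    ∫ s in (0 : ℝ)..t, (f s - f (s - τ)) = (∫ s in (t - τ)..t, f s) - c * τ := by
  have hpast : ∫ s in (0 - τ)..0, f s = c * τ := by
    rw [integral_congr (g := fun _ => c) fun s hs => hhist s ?_]
    · simp [mul_comm]
    · rw [uIcc_of_le (by linarith)] at hs
      exact hs.2
  rw [integral_sub_comp_sub_right hf, hpast]

theorem stmt_7_general (f Ψ : ℝ → ℝ) (c θ L : ℝ) (hθ : 0 < θ) (hθL : θ < L)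
    (hfc : Continuous f) (hf0 : ∀ s, 0 ≤ f s)
    (hhist : ∀ s ≤ (0:ℝ), f s = c)
    (hΨi : Integrable Ψ) (hΨ0 : ∀ τ, 0 ≤ Ψ τ) :
    ∀ t ≥ (0:ℝ),
      (c * (∫ τ in θ..L, Ψ τ * τ)
          + ∫ s in (0:ℝ)..t, ∫ τ in θ..L, (f s - f (s - τ)) * Ψ τ)
        = (∫ τ in θ..L, Ψ τ * ∫ s in (t - τ)..t, f s) ∧
      0 ≤ c * (∫ τ in θ..L, Ψ τ * τ)
          + ∫ s in (0:ℝ)..t, ∫ τ in θ..L, (f s - f (s - τ)) * Ψ τ := by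
  intro t _
  have hΨ : IntervalIntegrable Ψ volume θ L := hΨi.intervalIntegrable
  have hinner : ∀ τ ∈ uIcc θ L, ∫ s in (0 : ℝ)..t, (f s - f (s - τ)) * Ψ τ
      = Ψ τ * (∫ s in (t - τ)..t, f s) - c * (Ψ τ * τ) := by
    intro τ hτ
    rw [uIcc_of_le hθL.le] at hτ
    rw [intervalIntegral.integral_mul_const,
      integral_sub_comp_sub_right_of_constant_history hfc hhist (hθ.le.trans hτ.1)]
    ring
  have hE : c * (∫ τ in θ..L, Ψ τ * τ) + ∫ s in (0 : ℝ)..t, ∫ τ in θ..L, (f s - f (s - τ)) * Ψ τ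
      = ∫ τ in θ..L, Ψ τ * ∫ s in (t - τ)..t, f s := by
    rw [intervalIntegral_intervalIntegral_swap_of_continuous_mul (g := fun s τ => f s - f (s - τ))
        (hfc.comp continuous_fst |>.sub (hfc.comp (continuous_fst.sub continuous_snd))) hΨ,
      integral_congr hinner,
      integral_sub (hΨ.mul_continuousOn (continuous_integral_sub_left hfc t).continuousOn)
        ((hΨ.mul_continuousOn (continuousOn_id' _)).const_mul c),
      intervalIntegral.integral_const_mul]
    ring
  refine ⟨hE, hE ▸ integral_nonneg hθL.le fun τ hτ => mul_nonneg (hΨ0 τ) ?_⟩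
  exact integral_nonneg (by linarith [hτ.1]) fun s _ => hf0 s

theorem stmt_7 (f Ψ : ℝ → ℝ) (c θ L : ℝ) (hθ : 0 < θ) (hθL : θ < L)
    (hc : 0 < c) (hfc : Continuous f) (hf0 : ∀ s, 0 ≤ f s)
    (hhist : ∀ s ≤ (0:ℝ), f s = c)
    (hΨi : Integrable Ψ) (hΨ0 : ∀ τ, 0 ≤ Ψ τ)
    (hΨs : ∀ τ, τ ∉ Set.Icc θ L → Ψ τ = 0)
    (hΨ1 : ∫ τ : ℝ, Ψ τ = 1) :
    ∀ t ≥ (0:ℝ),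
      (c * (∫ τ in θ..L, Ψ τ * τ)
          + ∫ s in (0:ℝ)..t, ∫ τ in θ..L, (f s - f (s - τ)) * Ψ τ)
        = (∫ τ in θ..L, Ψ τ * ∫ s in (t - τ)..t, f s) ∧
      0 ≤ c * (∫ τ in θ..L, Ψ τ * τ)
          + ∫ s in (0:ℝ)..t, ∫ τ in θ..L, (f s - f (s - τ)) * Ψ τ :=
  stmt_7_general f Ψ c θ L hθ hθL hfc hf0 hhist hΨi hΨ0
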